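/- Suppose R is a principal ideal domain, a_1 ≠ 0, 1 < m ≤ n, and Ra_1 + ⋯ + Ra_m = R. Then there exist matrices X ∈ M_{m−1}(R) and Y ∈ M_{(m−1)×(n−m)}(R) such that X is upper triangular with diagonal entries a_1/(a_1,a_2), (a_1,a_2)/(a_1,a_2,a_3), …, (a_1,…,a_{m−2})/(a_1,…,a_{m−1}), (a_1,…,a_{m−1}) (in this order), and the columns of the block matrix A = [[X, Y],[0, I_{n−m}]] ∈ M_{n−1}(R) are the coordinates, relative to w(1,2),…,w(1,n), of vectors z_2,…,z_n forming an R-basis of S. -/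

import Mathlib

/-!
Indices are shifted by one: `a 0` is the paper's `a₁`. In coordinates relative to the `w(1,j)`,
`S` becomes the lattice `L = {v | a 0 ∣ ∑ v i * a (i + 1)}`. Let `h t` generate
`(a 0, …, a t)`, normalized to `1` once this ideal is `R`, and `d t = h t / h (t + 1)`.
Since `h t ∣ a (t + 1) * d t`, this product is a combination of `a 0, …, a t`, which gives a
column of `L` with diagonal entry `d t` and zeros below it: these columns form `A`.
Conversely, if `v ∈ L` vanishes beyond `k`, then `h k ∣ a (k + 1) * v k`, and as
`h (k + 1) ∈ (h k, a (k + 1))` this forces `d k ∣ v k`; subtracting a multiple of column `k`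
and descending on `k` shows that the columns of `A` span `L`.
-/

open Matrix

section

variable {R : Type*} [CommRing R]

theorem dvd_of_mul_dvd_of_mem_span_pair [IsDomain R] {g a c d g' : R} (hg' : g' ≠ 0)
    (hmem : g' ∈ Ideal.span {g, a}) (hd : d * g' ∣ g) (hc : g ∣ a * c) : d ∣ c := by
  obtain ⟨u, v, rfl⟩ := Ideal.mem_span_pair.mp hmem
  have hg : g ∣ c * (u * g + v * a) := by
    convert dvd_add (dvd_mul_left g (c * u)) (dvd_mul_of_dvd_right hc v) using 1
    ring
  exact (mul_dvd_mul_iff_right hg').mp (hd.trans hg)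

theorem Matrix.range_mulVecLin_eq_of_isUpperTriangular {n : ℕ} {A : Matrix (Fin n) (Fin n) R}
    (hA : A.IsUpperTriangular) {L : Submodule R (Fin n → R)}
    (hle : LinearMap.range A.mulVecLin ≤ L)
    (hdvd : ∀ v ∈ L, ∀ k, (∀ i, k < i → v i = 0) → A k k ∣ v k) :
    LinearMap.range A.mulVecLin = L := by
  refine le_antisymm hle fun v hv => ?_
  suffices ∀ k : ℕ, ∀ v ∈ L, (∀ i : Fin n, k ≤ i → v i = 0) → ∃ c, A *ᵥ c = v from
    this n v hv fun i hi => absurd i.isLt (by omega)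
  intro k
  induction k with
  | zero =>
    intro v _ hv0
    exact ⟨0, by rw [mulVec_zero]; funext i; exact (hv0 i (Nat.zero_le _)).symm⟩
  | succ k ih =>
    intro v hv hv0
    by_cases hk : k < n
    · let kk : Fin n := ⟨k, hk⟩
      obtain ⟨q, hq⟩ := hdvd v hv kk fun i hi => hv0 i hi
      have hv' : v - A *ᵥ Pi.single kk q ∈ L := L.sub_mem hv (hle ⟨_, rfl⟩)
      obtain ⟨c, hc⟩ := ih _ hv' fun i hi => by
        rw [Pi.sub_apply, mulVec_single, Pi.smul_apply, col_apply, op_smul_eq_mul]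
        rcases hi.eq_or_lt with hik | hik
        · rw [show i = kk from Fin.ext hik.symm, hq, mul_comm]; exact sub_self _
        · rw [hv0 i hik, hA (show kk < i from hik), zero_mul, sub_zero]
      exact ⟨c + Pi.single kk q, by rw [mulVec_add, hc, sub_add_cancel]⟩
    · exact ih v hv fun i hi => absurd i.isLt (by omega)

theorem Matrix.injective_mulVecLin_of_isUpperTriangular [IsDomain R] {n : ℕ}
    {A : Matrix (Fin n) (Fin n) R} (hA : A.IsUpperTriangular) (hdiag : ∀ i, A i i ≠ 0) :
    Function.Injective A.mulVecLin := by
  have hdet : A.det ≠ 0 := by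
    rw [det_of_isUpperTriangular hA]
    exact Finset.prod_ne_zero_iff.mpr fun i _ => hdiag i
  rw [← LinearMap.ker_eq_bot, LinearMap.ker_eq_bot']
  exact fun v hv => eq_zero_of_mulVec_eq_zero hdet hv

theorem Module.Basis.exists_of_range_eq {ι M : Type*} [Fintype ι] [DecidableEq ι]
    [AddCommGroup M] [Module R M] {f : (ι → R) →ₗ[R] M} (hf : Function.Injective f)
    {S : Submodule R M} (hS : LinearMap.range f = S) :
    ∃ b : Module.Basis ι R S, ∀ j, (b j : M) = f (Pi.single j 1) := by
  subst hS
  exact ⟨(Pi.basisFun R ι).map (LinearEquiv.ofInjective f hf), fun j => by simp⟩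

section Lattice

variable {N : ℕ} (a : Fin (N + 1) → R)

def coordLattice : Submodule R (Fin N → R) :=
  Submodule.comap (Fintype.linearCombination R (a ∘ Fin.succ)) (Ideal.span {a 0})

def prefixIdeal (t : ℕ) : Ideal R :=
  Ideal.span {x | ∃ i : Fin (N + 1), (i : ℕ) ≤ t ∧ x = a i}

variable {a}

theorem mem_coordLattice {v : Fin N → R} : v ∈ coordLattice a ↔ a 0 ∣ ∑ i, v i * a i.succ := by
  simp [coordLattice, Ideal.mem_span_singleton, Fintype.linearCombination_apply]

theorem apply_mem_prefixIdeal {t : ℕ} {i : Fin (N + 1)} (hi : (i : ℕ) ≤ t) :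
    a i ∈ prefixIdeal a t :=
  Ideal.subset_span ⟨i, hi, rfl⟩

theorem prefixIdeal_mono {s t : ℕ} (hst : s ≤ t) : prefixIdeal a s ≤ prefixIdeal a t :=
  Ideal.span_mono fun _ ⟨i, hi, hx⟩ => ⟨i, hi.trans hst, hx⟩

theorem prefixIdeal_succ_le (k : Fin N) :
    prefixIdeal a (k + 1) ≤ prefixIdeal a k ⊔ Ideal.span {a k.succ} := by
  refine Ideal.span_le.mpr ?_
  rintro _ ⟨i, hi, rfl⟩
  rcases hi.lt_or_eq with hik | hik
  · exact Ideal.mem_sup_left (apply_mem_prefixIdeal (Nat.le_of_lt_succ hik))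
  · rw [show i = k.succ from Fin.ext hik]
    exact Ideal.mem_sup_right (Ideal.mem_span_singleton_self _)

theorem exists_dvd_sub_of_mem_prefixIdeal {t : ℕ} {x : R} (hx : x ∈ prefixIdeal a t) :
    ∃ c : Fin N → R, (∀ i : Fin N, t ≤ i → c i = 0) ∧ a 0 ∣ x - ∑ i, c i * a i.succ := by
  have hP : {x | ∃ i : Fin (N + 1), (i : ℕ) ≤ t ∧ x = a i} = a '' {i | (i : ℕ) ≤ t} := by
    ext; simp [eq_comm]
  rw [prefixIdeal, hP] at hx
  obtain ⟨l, hl, rfl⟩ := (Finsupp.mem_span_image_iff_linearCombination R).mp hx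
  refine ⟨fun i => l i.succ, fun i hi => (Finsupp.mem_supported' R l).mp hl _ ?_, l 0, ?_⟩
  · simpa [Fin.val_succ] using hi
  · rw [Finsupp.linearCombination_apply, Finsupp.sum_fintype _ _ (by simp), Fin.sum_univ_succ]
    simp [smul_eq_mul, mul_comm]

theorem mul_mem_prefixIdeal_of_mem_coordLattice {v : Fin N → R} (hv : v ∈ coordLattice a)
    {k : Fin N} (hk : ∀ i, k < i → v i = 0) : a k.succ * v k ∈ prefixIdeal a k := by
  have hsum : ∑ i, v i * a i.succ ∈ prefixIdeal a k := by
    obtain ⟨r, hr⟩ := mem_coordLattice.mp hv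
    rw [hr]
    exact Ideal.mul_mem_right _ _ (apply_mem_prefixIdeal (Nat.zero_le _))
  have hrest : ∑ i ∈ Finset.univ.erase k, v i * a i.succ ∈ prefixIdeal a k := by
    refine Ideal.sum_mem _ fun i hi => ?_
    rcases lt_or_gt_of_ne (Finset.ne_of_mem_erase hi) with hik | hik
    · exact Ideal.mul_mem_left _ _ (apply_mem_prefixIdeal hik)
    · rw [hk i hik, zero_mul]
      exact Ideal.zero_mem _
  rw [← Finset.add_sum_erase _ _ (Finset.mem_univ k), Ideal.add_mem_iff_left _ hrest] at hsum
  rwa [mul_comm]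

theorem exists_matrix_range_le_coordLattice {T : ℕ} {d : Fin N → R}
    (hd : ∀ j : Fin N, a j.succ * d j ∈ prefixIdeal a (min (j : ℕ) T)) :
    ∃ A : Matrix (Fin N) (Fin N) R, (∀ i j : Fin N, i ≠ j → min (j : ℕ) T ≤ i → A i j = 0) ∧
      (∀ i, A i i = d i) ∧ LinearMap.range A.mulVecLin ≤ coordLattice a := by
  choose c hc0 hc using fun j => exists_dvd_sub_of_mem_prefixIdeal (hd j)
  let A : Matrix (Fin N) (Fin N) R := of fun i j => (if i = j then d j else 0) - c j i
  refine ⟨A, fun i j hij hi => by simp [A, hij, hc0 j i hi],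
    fun i => by simp [A, hc0 i i (min_le_left _ _)], ?_⟩
  rw [range_mulVecLin, Submodule.span_le]
  rintro _ ⟨j, rfl⟩
  rw [SetLike.mem_coe, mem_coordLattice]
  convert hc j using 1
  simp [A, mul_sub, Finset.sum_sub_distrib, mul_comm]

end Lattice

section GcdChain

variable {N : ℕ} {a : Fin (N + 1) → R}

theorem exists_prefixIdeal_generators_normalized {g : ℕ → R} {T : ℕ}
    (hg : ∀ t, Ideal.span {g t} = prefixIdeal a t) (hT : prefixIdeal a T = ⊤) :
    ∃ h : ℕ → R, (∀ t, Ideal.span {h t} = prefixIdeal a t) ∧ (∀ t < T, h t = g t) ∧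
      ∀ t, T ≤ t → h t = 1 := by
  refine ⟨fun t => if t < T then g t else 1, fun t => ?_, fun t ht => if_pos ht,
    fun t ht => if_neg (by omega)⟩
  dsimp only
  split_ifs with ht
  · exact hg t
  · rw [Ideal.span_singleton_one, eq_comm, eq_top_iff, ← hT]
    exact prefixIdeal_mono (by omega)

variable {h : ℕ → R} (hh : ∀ t, Ideal.span {h t} = prefixIdeal a t)
include hh

theorem dvd_iff_mem_prefixIdeal {t : ℕ} {x : R} : h t ∣ x ↔ x ∈ prefixIdeal a t := by
  rw [← Ideal.mem_span_singleton, hh]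

theorem ne_zero_of_span_eq_prefixIdeal (ha0 : a 0 ≠ 0) (t : ℕ) : h t ≠ 0 := by
  rintro h0
  have hdvd : h t ∣ a 0 := (dvd_iff_mem_prefixIdeal hh).mpr (apply_mem_prefixIdeal t.zero_le)
  exact ha0 (zero_dvd_iff.mp (h0 ▸ hdvd))

theorem exists_matrix_range_eq_coordLattice [IsDomain R] (ha0 : a 0 ≠ 0) {T : ℕ}
    (hT : prefixIdeal a T = ⊤) :
    ∃ A : Matrix (Fin N) (Fin N) R, (∀ i j : Fin N, i ≠ j → min (j : ℕ) T ≤ i → A i j = 0) ∧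
      (∀ i, A i i * h (i + 1) = h i) ∧ Function.Injective A.mulVecLin ∧
      LinearMap.range A.mulVecLin = coordLattice a := by
  have hsucc (t : ℕ) : h (t + 1) ∣ h t := (dvd_iff_mem_prefixIdeal hh).mpr
    (prefixIdeal_mono t.le_succ ((dvd_iff_mem_prefixIdeal hh).mp dvd_rfl))
  choose d hd using hsucc
  have hcol (j : Fin N) : a j.succ * d j ∈ prefixIdeal a (min j T) := by
    rcases le_total (j : ℕ) T with hjT | hjT
    · rw [min_eq_left hjT, ← dvd_iff_mem_prefixIdeal hh, hd]
      exact mul_dvd_mul_right ((dvd_iff_mem_prefixIdeal hh).mpr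
        (apply_mem_prefixIdeal (j.val_succ ▸ le_rfl))) _
    · rw [min_eq_right hjT, hT]
      exact Submodule.mem_top
  obtain ⟨A, hA0, hAd, hAL⟩ := exists_matrix_range_le_coordLattice hcol
  have hupper : A.IsUpperTriangular := fun i j hji =>
    hA0 i j (ne_of_gt hji) ((min_le_left _ _).trans hji.le)
  have hdiag (i : ℕ) : d i * h (i + 1) = h i := by rw [mul_comm, ← hd]
  refine ⟨A, hA0, fun i => by rw [hAd, hdiag],
    injective_mulVecLin_of_isUpperTriangular hupper fun i h0 =>
      ne_zero_of_span_eq_prefixIdeal hh ha0 i (by rw [← hdiag, ← hAd, h0, zero_mul]),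
    range_mulVecLin_eq_of_isUpperTriangular hupper hAL fun v hv k hk => ?_⟩
  rw [hAd]
  refine dvd_of_mul_dvd_of_mem_span_pair (ne_zero_of_span_eq_prefixIdeal hh ha0 (k + 1)) ?_
    (hdiag k).dvd ((dvd_iff_mem_prefixIdeal hh).mpr (mul_mem_prefixIdeal_of_mem_coordLattice hv hk))
  rw [Ideal.span_insert, hh]
  exact prefixIdeal_succ_le k ((dvd_iff_mem_prefixIdeal hh).mp dvd_rfl)

end GcdChain

section Coordinates

variable (K : Type*) [Field K] [Algebra R K] {N : ℕ} (a : Fin (N + 1) → R)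

def basicSolution (j : Fin N) : Fin (N + 1) → K := fun k =>
  if k = 0 then -(algebraMap R K (a j.succ)) / algebraMap R K (a 0)
  else if k = j.succ then 1 else 0

variable {K a}

theorem linearCombination_basicSolution_succ (v : Fin N → R) (j : Fin N) :
    Fintype.linearCombination R (basicSolution K a) v j.succ = algebraMap R K (v j) := by
  simp [Fintype.linearCombination_apply, basicSolution, Algebra.smul_def, Fin.succ_ne_zero]

theorem linearCombination_basicSolution_zero (v : Fin N → R) :
    Fintype.linearCombination R (basicSolution K a) v 0 =
      -algebraMap R K (∑ i, v i * a i.succ) / algebraMap R K (a 0) := by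
  simp [Fintype.linearCombination_apply, basicSolution, Algebra.smul_def]
  rw [neg_div, Finset.sum_div, ← Finset.sum_neg_distrib]
  exact Finset.sum_congr rfl fun i _ => by ring

variable [FaithfulSMul R K]

theorem injective_linearCombination_basicSolution :
    Function.Injective (Fintype.linearCombination R (basicSolution K a)) := fun v v' hv =>
  funext fun j => FaithfulSMul.algebraMap_injective R K <| by
    rw [← linearCombination_basicSolution_succ, ← linearCombination_basicSolution_succ, hv]

theorem mem_map_coordLattice_iff (ha0 : a 0 ≠ 0) {x : Fin (N + 1) → K} :
    x ∈ (coordLattice a).map (Fintype.linearCombination R (basicSolution K a)) ↔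
      (∀ i, ∃ r : R, algebraMap R K r = x i) ∧ ∑ i, algebraMap R K (a i) * x i = 0 := by
  have hinj := FaithfulSMul.algebraMap_injective R K
  have ha0K : algebraMap R K (a 0) ≠ 0 := (map_ne_zero_iff _ hinj).mpr ha0
  constructor
  · rintro ⟨v, hv, rfl⟩
    obtain ⟨r, hr⟩ := mem_coordLattice.mp hv
    refine ⟨fun i => ?_, ?_⟩
    · cases i using Fin.cases with
      | zero =>
        refine ⟨-r, ?_⟩
        rw [linearCombination_basicSolution_zero, hr, map_neg, map_mul]
        field_simp
      | succ j => exact ⟨v j, (linearCombination_basicSolution_succ v j).symm⟩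
    · simp only [Fin.sum_univ_succ, linearCombination_basicSolution_zero,
        linearCombination_basicSolution_succ, ← map_mul, ← map_sum, hr]
      field_simp
      rw [← hr]
      simp only [mul_comm (a _), neg_add_cancel]
  · rintro ⟨hx, hsum⟩
    choose r hr using hx
    have hR : a 0 * r 0 + ∑ i : Fin N, r i.succ * a i.succ = 0 := hinj <| by
      simpa [Fin.sum_univ_succ, ← hr, mul_comm] using hsum
    refine ⟨fun j => r j.succ, mem_coordLattice.mpr ⟨-r 0, by linear_combination hR⟩,
      funext (Fin.cases ?_ fun j => ?_)⟩
    · rw [linearCombination_basicSolution_zero,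
        show ∑ i : Fin N, r i.succ * a i.succ = -(a 0 * r 0) by linear_combination hR,
        map_neg, neg_neg, map_mul, mul_div_cancel_left₀ _ ha0K, hr]
    · rw [linearCombination_basicSolution_succ, hr]

end Coordinates

end

theorem stmt_12_general {R : Type*} [CommRing R] [IsDomain R]
    {K : Type*} [Field K] [Algebra R K] [IsFractionRing R K]
    {N : ℕ} (a : Fin (N + 1) → R)
    (ha1 : a 0 ≠ 0)
    (mM : ℕ) (hm1 : 1 < mM)
    (hMuni : Ideal.span {x | ∃ i : Fin (N + 1), (i : ℕ) < mM ∧ x = a i} = ⊤)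
    (g : ℕ → R)
    (hg : ∀ t, Ideal.span {g t} =
      Ideal.span {x | ∃ i : Fin (N + 1), (i : ℕ) ≤ t ∧ x = a i})
    (SF : Submodule R (Fin (N + 1) → K))
    (hSF : ∀ x, x ∈ SF ↔ (∀ i, ∃ r : R, algebraMap R K r = x i) ∧
      ∑ i, algebraMap R K (a i) * x i = 0)
    (w : Fin N → Fin (N + 1) → K)
    (hw : ∀ j k, w j k =
      if k = 0 then -(algebraMap R K (a j.succ)) / algebraMap R K (a 0)
      else if k = j.succ then 1 else 0) :
    ∃ A : Matrix (Fin N) (Fin N) R,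
      (∀ i j : Fin N, (j : ℕ) < mM - 1 → j < i → A i j = 0) ∧
      (∀ i : Fin N, (i : ℕ) < mM - 2 → A i i * g ((i : ℕ) + 1) = g (i : ℕ)) ∧
      (∀ i : Fin N, (i : ℕ) = mM - 2 → A i i = g (mM - 2)) ∧
      (∀ i j : Fin N, mM - 1 ≤ (i : ℕ) → mM - 1 ≤ (j : ℕ) →
        A i j = if i = j then 1 else 0) ∧
      ∃ bS : Module.Basis (Fin N) R SF, ∀ j : Fin N,
        (bS j : Fin (N + 1) → K) = ∑ i, algebraMap R K (A i j) • w i := by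
  obtain rfl : w = basicSolution K a := funext fun j => funext (hw j)
  have hT : prefixIdeal a (mM - 1) = ⊤ := by
    simpa only [prefixIdeal, Nat.le_sub_one_iff_lt (by omega : 0 < mM)] using hMuni
  obtain ⟨h, hh, hhg, hh1⟩ := exists_prefixIdeal_generators_normalized hg hT
  obtain ⟨A, hA0, hAd, hAinj, hArange⟩ := exists_matrix_range_eq_coordLattice hh ha1 hT
  have hrange : LinearMap.range
      (Fintype.linearCombination R (basicSolution K a) ∘ₗ A.mulVecLin) = SF := by
    ext x
    rw [LinearMap.range_comp, hArange, mem_map_coordLattice_iff ha1, hSF]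
  obtain ⟨b, hb⟩ := Module.Basis.exists_of_range_eq
    (injective_linearCombination_basicSolution.comp hAinj) hrange
  refine ⟨A, fun i j hj hij => hA0 i j hij.ne' (by omega), fun i hi => ?_, fun i hi => ?_,
    fun i j hi hj => ?_, b, fun j => ?_⟩
  · rw [← hhg (i + 1) (by omega), ← hhg i (by omega), hAd]
  · rw [← mul_one (A i i), ← hh1 (i + 1) (by omega), hAd, hhg i (by omega), hi]
  · split_ifs with hij
    · rw [← hij, ← hh1 i hi, ← hAd, hh1 (i + 1) (by omega), mul_one]
    · exact hA0 i j hij (by omega)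
  · simp [hb, Fintype.linearCombination_apply, algebraMap_smul]

/-- Theorem `basis`: taking `M = {a₁,…,a_m}` with `Ra₁+⋯+Ra_m = R`,
`a₁ ≠ 0` and `1 < m ≤ n`, there are matrices `X ∈ M_{m−1}(R)`,
`Y ∈ M_{(m−1)×(n−m)}(R)` with `X` upper triangular with diagonal entries
`a₁/(a₁,a₂), (a₁,a₂)/(a₁,a₂,a₃), …, (a₁,…,a_{m−2})/(a₁,…,a_{m−1}),
(a₁,…,a_{m−1})`, such that the columns of `A = [[X,Y],[0,I]]` are the
coordinates, relative to `w(1,2),…,w(1,n)`, of an `R`-basis `z₂,…,zₙ` of `S`.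
Here `n = N + 1`, `g t` is a gcd of `a₁,…,a_{t+1}` with `g 0 = a₁`, and the
diagonal conditions are expressed by exact-division identities. -/
theorem stmt_12 {R : Type*} [CommRing R] [IsDomain R] [IsPrincipalIdealRing R]
    {K : Type*} [Field K] [Algebra R K] [IsFractionRing R K]
    {N : ℕ} (hN : 1 ≤ N) (a : Fin (N + 1) → R)
    (huni : Ideal.span (Set.range a) = ⊤) (ha1 : a 0 ≠ 0)
    (mM : ℕ) (hm1 : 1 < mM) (hmn : mM ≤ N + 1)
    (hMuni : Ideal.span {x | ∃ i : Fin (N + 1), (i : ℕ) < mM ∧ x = a i} = ⊤)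
    (g : ℕ → R) (hg0 : g 0 = a 0)
    (hg : ∀ t, Ideal.span {g t} =
      Ideal.span {x | ∃ i : Fin (N + 1), (i : ℕ) ≤ t ∧ x = a i})
    (SF : Submodule R (Fin (N + 1) → K))
    (hSF : ∀ x, x ∈ SF ↔ (∀ i, ∃ r : R, algebraMap R K r = x i) ∧
      ∑ i, algebraMap R K (a i) * x i = 0)
    (w : Fin N → Fin (N + 1) → K)
    (hw : ∀ j k, w j k =
      if k = 0 then -(algebraMap R K (a j.succ)) / algebraMap R K (a 0)
      else if k = j.succ then 1 else 0) :
    ∃ A : Matrix (Fin N) (Fin N) R,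
      (∀ i j : Fin N, (j : ℕ) < mM - 1 → j < i → A i j = 0) ∧
      (∀ i : Fin N, (i : ℕ) < mM - 2 → A i i * g ((i : ℕ) + 1) = g (i : ℕ)) ∧
      (∀ i : Fin N, (i : ℕ) = mM - 2 → A i i = g (mM - 2)) ∧
      (∀ i j : Fin N, mM - 1 ≤ (i : ℕ) → mM - 1 ≤ (j : ℕ) →
        A i j = if i = j then 1 else 0) ∧
      ∃ bS : Module.Basis (Fin N) R SF, ∀ j : Fin N,
        (bS j : Fin (N + 1) → K) = ∑ i, algebraMap R K (A i j) • w i :=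
  stmt_12_general a ha1 mM hm1 hMuni g hg SF hSF w hw
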